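/- For every connected graph G, gp(G) ≤ gp(D(G)) ≤ 2·gp(G). -/

import Mathlib

open SimpleGraph

variable {V : Type*}

/-- A walk is a shortest path if it is a path and its length equals the distance
between its endpoints. -/
def SimpleGraph.IsShortestPath (G : SimpleGraph V) {u v : V} (p : G.Walk u v) : Prop :=
  p.IsPath ∧ p.length = G.dist u v

/-- `S` is a general position set: no three vertices of `S` lie on a common shortest path. -/
def SimpleGraph.IsGPSet (G : SimpleGraph V) (S : Set V) : Prop :=
  ∀ ⦃u v : V⦄ (p : G.Walk u v), G.IsShortestPath p →
    ∀ x ∈ S, ∀ y ∈ S, ∀ z ∈ S, x ≠ y → x ≠ z → y ≠ z →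
      ¬ (x ∈ p.support ∧ y ∈ p.support ∧ z ∈ p.support)

/-- `u` and `v` are `S`-visible: some shortest `u,v`-path has no internal vertex in `S`. -/
def SimpleGraph.SVisible (G : SimpleGraph V) (S : Set V) (u v : V) : Prop :=
  ∃ p : G.Walk u v, G.IsShortestPath p ∧ ∀ w ∈ p.support, w ≠ u → w ≠ v → w ∉ S

/-- `S` is a mutual-visibility set. -/
def SimpleGraph.IsMVSet (G : SimpleGraph V) (S : Set V) : Prop :=
  ∀ u ∈ S, ∀ v ∈ S, u ≠ v → G.SVisible S u v

/-- `S` is a total mutual-visibility set. -/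
def SimpleGraph.IsTotalMVSet (G : SimpleGraph V) (S : Set V) : Prop :=
  ∀ u v : V, u ≠ v → G.SVisible S u v

/-- `S` is an outer mutual-visibility set. -/
def SimpleGraph.IsOuterMVSet (G : SimpleGraph V) (S : Set V) : Prop :=
  G.IsMVSet S ∧ ∀ u ∈ S, ∀ v ∉ S, u ≠ v → G.SVisible S u v

/-- The mutual-visibility number `μ(G)`. -/
noncomputable def SimpleGraph.mutualVisibilityNumber (G : SimpleGraph V) [Fintype V] : ℕ :=
  sSup {k | ∃ S : Finset V, G.IsMVSet ↑S ∧ S.card = k}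

/-- The total mutual-visibility number `μ_t(G)`. -/
noncomputable def SimpleGraph.totalMutualVisibilityNumber (G : SimpleGraph V) [Fintype V] : ℕ :=
  sSup {k | ∃ S : Finset V, G.IsTotalMVSet ↑S ∧ S.card = k}

/-- The outer mutual-visibility number `μ_o(G)`. -/
noncomputable def SimpleGraph.outerMutualVisibilityNumber (G : SimpleGraph V) [Fintype V] : ℕ :=
  sSup {k | ∃ S : Finset V, G.IsOuterMVSet ↑S ∧ S.card = k}

/-- The general position number `gp(G)`. -/
noncomputable def SimpleGraph.gpNumber (G : SimpleGraph V) [Fintype V] : ℕ :=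
  sSup {k | ∃ S : Finset V, G.IsGPSet ↑S ∧ S.card = k}

/-- The double graph `D(G)`: two copies of each vertex, `(u, b)` adjacent to `(v, c)`
iff `u` adjacent to `v` in `G`. -/
def SimpleGraph.doubleGraph (G : SimpleGraph V) : SimpleGraph (V × Bool) where
  Adj x y := G.Adj x.1 y.1
  symm := ⟨fun _ _ h => G.adj_symm h⟩
  loopless := ⟨fun x h => G.irrefl h⟩

/-- The Mycielskian `M(G)`: `some (u, false)` are the original vertices, `some (u, true)`
their copies, and `none` is the apex vertex `v*`. -/
def SimpleGraph.mycielskian (G : SimpleGraph V) : SimpleGraph (Option (V × Bool)) where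
  Adj x y := match x, y with
    | some (u, false), some (v, false) => G.Adj u v
    | some (u, false), some (v, true) => G.Adj u v
    | some (u, true), some (v, false) => G.Adj u v
    | some (_, true), none => True
    | none, some (_, true) => True
    | _, _ => False
  symm := by
    constructor
    rintro (_ | ⟨u, (_|_)⟩) (_ | ⟨v, (_|_)⟩) h <;>
      first
        | exact h
        | exact G.adj_symm h
  loopless := by
    constructor
    rintro (_ | ⟨u, (_|_)⟩) h
    · exact h
    · exact G.irrefl h
    · exact h


/-!
The projection `D(G) → G` and, for each labelling `σ : V → Bool`, the lift `v ↦ (v, σ v)` are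
graph homomorphisms, so `D(G)` and `G` have the same distance between vertices with different
first coordinates. Hence a general position set of `G` stays one in a copy of `G` inside `D(G)`,
and the first coordinates of a general position set of `D(G)` form one of `G`: three of them on a
shortest path of `G` lift, through a labelling that picks the right copies, to a shortest path of
`D(G)`. The only shortest paths of `D(G)` that do not project to shortest paths join the two
copies of a vertex and have length two, so they meet only two vertices of `G`. Each vertex has two
copies, so projecting at most halves the size.
-/

namespace SimpleGraph

variable (G : SimpleGraph V)

def doubleGraphFst : G.doubleGraph →g G := ⟨Prod.fst, id⟩

def doubleGraphLift (σ : V → Bool) : G →g G.doubleGraph := ⟨fun v => (v, σ v), id⟩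

@[simp] lemma doubleGraphFst_apply (a : V × Bool) : G.doubleGraphFst a = a.1 := rfl

lemma doubleGraphLift_injective (σ : V → Bool) : Function.Injective (G.doubleGraphLift σ) :=
  fun _ _ h => congrArg Prod.fst h

variable {G}

lemma dist_doubleGraphLift (σ : V → Bool) (u v : V) :
    G.doubleGraph.dist (u, σ u) (v, σ v) = G.dist u v := by
  by_cases hr : G.Reachable u v
  · obtain ⟨p, hp⟩ := hr.exists_walk_length_eq_dist
    obtain ⟨q, hq⟩ := Reachable.exists_walk_length_eq_dist ⟨p.map (G.doubleGraphLift σ)⟩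
    apply le_antisymm
    · calc G.doubleGraph.dist (u, σ u) (v, σ v) ≤ (p.map (G.doubleGraphLift σ)).length :=
            G.doubleGraph.dist_le _
        _ = G.dist u v := by rw [Walk.length_map, hp]
    · calc G.dist u v ≤ (q.map G.doubleGraphFst).length := G.dist_le _
        _ = _ := by rw [Walk.length_map, hq]; rfl
  · have hr' : ¬ G.doubleGraph.Reachable (u, σ u) (v, σ v) := fun h => hr (h.map G.doubleGraphFst)
    rw [dist_eq_zero_of_not_reachable hr, dist_eq_zero_of_not_reachable hr']

lemma dist_doubleGraph_of_fst_ne {a b : V × Bool} (hab : a.1 ≠ b.1) :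
    G.doubleGraph.dist a b = G.dist a.1 b.1 := by
  classical
  simpa [hab.symm] using dist_doubleGraphLift (fun w => if w = a.1 then a.2 else b.2) a.1 b.1

lemma dist_doubleGraph_le_two_of_fst_eq {a b : V × Bool} (hab : a.1 = b.1)
    (q : G.doubleGraph.Walk a b) : G.doubleGraph.dist a b ≤ 2 := by
  by_cases hq : q.Nil
  · simp [hq.eq]
  · have ha : G.doubleGraph.Adj a q.snd := q.adj_snd hq
    have hb : G.doubleGraph.Adj q.snd b := show G.Adj _ _ from hab ▸ ha.symm
    simpa using G.doubleGraph.dist_le (.cons ha (.cons hb .nil))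

lemma Walk.mem_support_of_length_le_two {u v x : V} (p : G.Walk u v) (hp : p.length ≤ 2)
    (hx : x ∈ p.support) : x = u ∨ x = p.snd ∨ x = v := by
  obtain ⟨n, rfl, hn⟩ := Walk.mem_support_iff_exists_getVert.mp hx
  have hn2 : n ≤ 2 := hn.trans hp
  interval_cases n
  · simp
  · simp
  · exact .inr (.inr (p.getVert_of_length_le (by omega)))

lemma IsShortestPath.map_doubleGraphFst {a b : V × Bool} {q : G.doubleGraph.Walk a b}
    (hq : G.doubleGraph.IsShortestPath q) (hab : a.1 ≠ b.1) :
    G.IsShortestPath (q.map G.doubleGraphFst) := by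
  have hlen : (q.map G.doubleGraphFst).length = G.dist a.1 b.1 := by
    rw [Walk.length_map, hq.2, dist_doubleGraph_of_fst_ne hab]
  exact ⟨(q.map _).isPath_of_length_eq_dist hlen, hlen⟩

lemma IsGPSet.image_doubleGraph {S : Set V} (hS : G.IsGPSet S) (c : Bool) :
    G.doubleGraph.IsGPSet ((fun v => (v, c)) '' S) := by
  rintro a b q hq _ ⟨x, hx, rfl⟩ _ ⟨y, hy, rfl⟩ _ ⟨z, hz, rfl⟩ hxy hxz hyz ⟨hxq, hyq, hzq⟩
  replace hxy : x ≠ y := fun h => hxy (h ▸ rfl)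
  replace hxz : x ≠ z := fun h => hxz (h ▸ rfl)
  replace hyz : y ≠ z := fun h => hyz (h ▸ rfl)
  have mem_map {w : V} (hw : (w, c) ∈ q.support) : w ∈ (q.map G.doubleGraphFst).support :=
    (Walk.support_map _ _).symm ▸ List.mem_map_of_mem hw
  by_cases hab : a.1 = b.1
  · have hlen : (q.map G.doubleGraphFst).length ≤ 2 := by
      rw [Walk.length_map, hq.2]
      exact dist_doubleGraph_le_two_of_fst_eq hab q
    have on_two {w : V} (hw : (w, c) ∈ q.support) :
        w = a.1 ∨ w = (q.map G.doubleGraphFst).snd := by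
      have := (q.map _).mem_support_of_length_le_two hlen (mem_map hw)
      simp only [doubleGraphFst_apply, ← hab] at this
      tauto
    rcases on_two hxq with rfl | rfl <;> rcases on_two hyq with h | h <;>
      rcases on_two hzq with h' | h' <;> simp_all
  · exact hS _ (hq.map_doubleGraphFst hab) x hx y hy z hz hxy hxz hyz
      ⟨mem_map hxq, mem_map hyq, mem_map hzq⟩

lemma IsGPSet.image_fst_of_doubleGraph {S : Set (V × Bool)} (hS : G.doubleGraph.IsGPSet S) :
    G.IsGPSet (Prod.fst '' S) := by
  classical
  rintro u v p hp _ ⟨x, hx, rfl⟩ _ ⟨y, hy, rfl⟩ _ ⟨z, hz, rfl⟩ hxy hxz hyz ⟨hxp, hyp, hzp⟩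
  let σ : V → Bool := fun w => if w = x.1 then x.2 else if w = y.1 then y.2 else z.2
  have hσx : (x.1, σ x.1) = x := by simp [σ]
  have hσy : (y.1, σ y.1) = y := by simp [σ, Ne.symm hxy]
  have hσz : (z.1, σ z.1) = z := by simp [σ, Ne.symm hxz, Ne.symm hyz]
  let L := p.map (G.doubleGraphLift σ)
  have hL : G.doubleGraph.IsShortestPath L :=
    ⟨hp.1.map (G.doubleGraphLift_injective σ),
      by rw [Walk.length_map, hp.2]; exact (dist_doubleGraphLift σ u v).symm⟩
  have mem_L {w : V} (hw : w ∈ p.support) : (w, σ w) ∈ L.support := by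
    rw [Walk.support_map]
    exact List.mem_map_of_mem hw
  refine hS L hL x hx y hy z hz (fun h => hxy (h ▸ rfl)) (fun h => hxz (h ▸ rfl))
    (fun h => hyz (h ▸ rfl)) ⟨?_, ?_, ?_⟩
  · exact hσx ▸ mem_L hxp
  · exact hσy ▸ mem_L hyp
  · exact hσz ▸ mem_L hzp

section gpNumber

variable [Fintype V]

lemma bddAbove_card_isGPSet : BddAbove {k | ∃ S : Finset V, G.IsGPSet ↑S ∧ S.card = k} :=
  ⟨Fintype.card V, by rintro _ ⟨T, -, rfl⟩; exact T.card_le_univ⟩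

lemma IsGPSet.card_le_gpNumber {S : Finset V} (hS : G.IsGPSet S) : S.card ≤ G.gpNumber :=
  le_csSup G.bddAbove_card_isGPSet ⟨S, hS, rfl⟩

lemma exists_isGPSet_card_eq_gpNumber : ∃ S : Finset V, G.IsGPSet S ∧ S.card = G.gpNumber := by
  have hne : {k | ∃ S : Finset V, G.IsGPSet ↑S ∧ S.card = k}.Nonempty :=
    ⟨0, ∅, by intro _ _ _ _ x hx; simp at hx, rfl⟩
  exact Nat.sSup_mem hne G.bddAbove_card_isGPSet

end gpNumber

end SimpleGraph

lemma Finset.card_le_two_mul_card_image_fst [DecidableEq V] (S : Finset (V × Bool)) :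
    S.card ≤ 2 * (S.image Prod.fst).card :=
  calc S.card ≤ (S.image Prod.fst ×ˢ (univ : Finset Bool)).card :=
        card_le_card fun p hp => mem_product.2 ⟨mem_image_of_mem _ hp, mem_univ _⟩
    _ = 2 * (S.image Prod.fst).card := by simp [mul_comm]

theorem gp_double_bounds_general [Fintype V] (G : SimpleGraph V) :
    G.gpNumber ≤ G.doubleGraph.gpNumber ∧ G.doubleGraph.gpNumber ≤ 2 * G.gpNumber := by
  classical
  constructor
  · obtain ⟨S, hS, hcard⟩ := G.exists_isGPSet_card_eq_gpNumber
    have hT : G.doubleGraph.IsGPSet ↑(S.image fun v => (v, false)) := by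
      simpa using hS.image_doubleGraph false
    calc G.gpNumber = (S.image fun v => (v, false)).card :=
          hcard ▸ (S.card_image_of_injective (Prod.mk_left_injective false)).symm
      _ ≤ G.doubleGraph.gpNumber := hT.card_le_gpNumber
  · obtain ⟨S, hS, hcard⟩ := G.doubleGraph.exists_isGPSet_card_eq_gpNumber
    have hT : G.IsGPSet ↑(S.image Prod.fst) := by
      simpa using hS.image_fst_of_doubleGraph
    calc G.doubleGraph.gpNumber = S.card := hcard.symm
      _ ≤ 2 * (S.image Prod.fst).card := S.card_le_two_mul_card_image_fst
      _ ≤ 2 * G.gpNumber := Nat.mul_le_mul_left 2 hT.card_le_gpNumber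

theorem gp_double_bounds [Fintype V] (G : SimpleGraph V) (hconn : G.Connected) :
    G.gpNumber ≤ G.doubleGraph.gpNumber ∧ G.doubleGraph.gpNumber ≤ 2 * G.gpNumber :=
  gp_double_bounds_general G
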